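/- arXiv:1607.03376 — 3 statements merged into one kernel-verified Lean document; each statement's English description precedes it below -/
import Mathlib

section
/- Let A be a unital C*-algebra, X and Y compact Hausdorff spaces, and ι_C : C(X) → A, ι_D : C(Y) → A unital *-homomorphisms forming a relatively diffuse pair. Let M be a unital C*-algebra and let φ : A → M, φ_C : ℓ∞(X) → M, φ_D : ℓ∞(Y) → M be unital *-homomorphisms such that φ_C composed with the inclusion C(X) ⊆ ℓ∞(X) equals φ ∘ ι_C, and φ_D composed with the inclusion C(Y) ⊆ ℓ∞(Y) equals φ ∘ ι_D. Then for every x ∈ X and y ∈ Y one has φ_C(δ_x) · φ_D(δ_y) = 0. -/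
/-!
Put `p = φC δ_x` and `q = φD δ_y`; these are projections, and `pq = 0` iff `qpq = 0`.
Every positive functional `Λ` on `M` vanishes on `qpq`: if `Λ q ≠ 0`, then
`z ↦ Λ (q φ(z) q) / Λ q` is a state of `A` that is evaluation at `y` on `C(Y)` (because
`δ_y g δ_y = g(y) δ_y` in `ℓ∞(Y)`), so relative diffuseness represents it on `C(X)` by an
atomless measure `μ`. For a bump function `f` at `x` we have `f ≥ δ_x` in `ℓ∞(X)`, hence
`0 ≤ Λ (qpq) ≤ Λ (q φ(ιC f) q) = Λ q · ∫ f dμ`, which can be made arbitrarily small.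
Finally, Hahn–Banach applied to `1 + qpq` gives a state with `Λ (qpq) = ‖qpq‖`, since a unital
functional of norm one on a C⋆-algebra is positive.
-/

open MeasureTheory
open scoped ENNReal ComplexOrder

/-- The canonical inclusion of `C(X)` into `ℓ∞(X)` for a compact Hausdorff space `X`,
sending a continuous function to the corresponding bounded function. -/
noncomputable def inclCLinf {X : Type*} [TopologicalSpace X] [CompactSpace X]
    (f : C(X, ℂ)) : lp (fun _ : X => ℂ) ∞ :=
  ⟨fun x => f x, memℓp_infty (isCompact_range ((map_continuous f).norm)).bddAbove⟩

open scoped Classical in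
/-- The indicator function `δ_x ∈ ℓ∞(X)` of the singleton `{x}`. -/
noncomputable def linfDelta {X : Type*} (x : X) : lp (fun _ : X => ℂ) ∞ :=
  ⟨fun z => if z = x then 1 else 0,
    memℓp_infty ⟨1, by rintro r ⟨z, rfl⟩; dsimp only; split <;> simp⟩⟩

/-- A pair of unital `*`-homomorphisms `ι_C : C(X) → A`, `ι_D : C(Y) → A` is *relatively
diffuse* if every state `ψ` of `A` whose composite with `ι_D` is multiplicative (i.e. a
character of `C(Y)`) is, on `C(X)`, given by integration against an atomless regular Borel
probability measure on `X`. -/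
def RelativelyDiffuse {A : Type*} [CStarAlgebra A]
    {X Y : Type*} [TopologicalSpace X] [CompactSpace X] [T2Space X]
    [MeasurableSpace X] [BorelSpace X]
    [TopologicalSpace Y] [CompactSpace Y] [T2Space Y]
    (ιC : C(X, ℂ) →⋆ₐ[ℂ] A) (ιD : C(Y, ℂ) →⋆ₐ[ℂ] A) : Prop :=
  ∀ ψ : A →ₗ[ℂ] ℂ, ψ 1 = 1 → (∀ a : A, 0 ≤ ψ (star a * a)) →
    (∀ g h : C(Y, ℂ), ψ (ιD (g * h)) = ψ (ιD g) * ψ (ιD h)) →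
    ∃ μ : Measure X, μ.Regular ∧ IsProbabilityMeasure μ ∧ NoAtoms μ ∧
      ∀ f : C(X, ℂ), ψ (ιC f) = ∫ x, f x ∂μ

namespace StrongDual

variable {M : Type*} [CStarAlgebra M] [Nontrivial M] {Λ : StrongDual ℂ M}

lemma im_apply_eq_zero_of_isSelfAdjoint (hΛ : ‖Λ‖ ≤ 1) (h1 : Λ 1 = 1) {s : M}
    (hs : IsSelfAdjoint s) : (Λ s).im = 0 := by
  have key : ∀ t : ℝ, ((Λ s).im + t) ^ 2 ≤ ‖s‖ ^ 2 + t ^ 2 := by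
    intro t
    set u := s + ((t : ℂ) * Complex.I) • (1 : M)
    have hu : star u * u = s * s + ((t : ℂ) ^ 2) • (1 : M) := by
      have hstar : star ((t : ℂ) * Complex.I) = -((t : ℂ) * Complex.I) := by simp
      simp only [u, star_add, star_smul, star_one, hs.star_eq, hstar, add_mul, mul_add,
        smul_mul_assoc, mul_smul_comm, one_mul, mul_one]
      match_scalars <;> ring_nf
      simp
    have hnorm : ‖u‖ ^ 2 ≤ ‖s‖ ^ 2 + t ^ 2 := by
      rw [sq ‖u‖, ← CStarRing.norm_star_mul_self, hu, ← hs.norm_mul_self]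
      refine (norm_add_le _ _).trans_eq ?_
      rw [norm_smul, norm_one, mul_one, norm_pow, Complex.norm_real, Real.norm_eq_abs, sq_abs]
    have him : (Λ u).im = (Λ s).im + t := by simp [u, h1]
    calc ((Λ s).im + t) ^ 2 = (Λ u).im ^ 2 := by rw [him]
      _ ≤ ‖Λ u‖ ^ 2 := by
        rw [← sq_abs]; gcongr; exact Complex.abs_im_le_norm _
      _ ≤ ‖u‖ ^ 2 := by
        gcongr; simpa using Λ.le_of_opNorm_le hΛ u
      _ ≤ _ := hnorm
  by_contra hβ
  have := key ((‖s‖ ^ 2 + 1) / (2 * (Λ s).im))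
  have h2 : 2 * (Λ s).im * ((‖s‖ ^ 2 + 1) / (2 * (Λ s).im)) = ‖s‖ ^ 2 + 1 := by field_simp
  nlinarith [sq_nonneg (Λ s).im]

lemma apply_nonneg_of_nonneg [PartialOrder M] [StarOrderedRing M] (hΛ : ‖Λ‖ ≤ 1) (h1 : Λ 1 = 1)
    {b : M} (hb : 0 ≤ b) : 0 ≤ Λ b := by
  have him := im_apply_eq_zero_of_isSelfAdjoint hΛ h1 (IsSelfAdjoint.of_nonneg hb)
  set d := algebraMap ℝ M ‖b‖ - b
  have hd : ‖d‖ ≤ ‖b‖ := by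
    refine (CStarAlgebra.norm_le_iff_le_algebraMap d (norm_nonneg b) ?_).2 (sub_le_self _ hb)
    exact sub_nonneg.2 (IsSelfAdjoint.of_nonneg hb).le_algebraMap_norm_self
  have hΛd : Λ d = ((‖b‖ - (Λ b).re : ℝ) : ℂ) := by
    rw [map_sub, IsScalarTower.algebraMap_apply ℝ ℂ M, Algebra.algebraMap_eq_smul_one, map_smul, h1]
    apply Complex.ext <;> simp [him]
  have := (Λ.le_of_opNorm_le hΛ d).trans (one_mul ‖d‖ ▸ hd)
  rw [hΛd, Complex.norm_real, Real.norm_eq_abs] at this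
  exact Complex.nonneg_iff.2 ⟨by linarith [le_abs_self (‖b‖ - (Λ b).re)], him.symm⟩

end StrongDual

lemma Complex.eq_of_norm_le_re {z : ℂ} {r : ℝ} (hz : ‖z‖ ≤ r) (hre : r ≤ z.re) : z = r := by
  have h0 : 0 ≤ z := Complex.re_eq_norm.1 (le_antisymm (Complex.re_le_norm z) (hz.trans hre))
  rw [Complex.eq_re_of_ofReal_le h0]
  exact congrArg _ (le_antisymm (z.re_le_norm.trans hz) hre)

section States

variable {M : Type*} [CStarAlgebra M] [Nontrivial M]

lemma CStarAlgebra.norm_one_add_of_nonneg [PartialOrder M] [StarOrderedRing M] {a : M}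
    (ha : 0 ≤ a) : ‖1 + a‖ = 1 + ‖a‖ := by
  refine le_antisymm ((norm_add_le _ _).trans (by simp)) ?_
  have hmem : 1 + ‖a‖ ∈ spectrum ℝ (1 + a) := by
    have := Set.add_mem_add (Set.mem_singleton (1 : ℝ))
      (CStarAlgebra.norm_mem_spectrum_of_nonneg ha)
    rwa [spectrum.singleton_add_eq, map_one] at this
  simpa [abs_of_nonneg (by positivity : (0 : ℝ) ≤ 1 + ‖a‖)] using spectrum.norm_le_norm_of_mem hmem

lemma exists_positiveLinearMap_apply_eq_norm [PartialOrder M] [StarOrderedRing M] {a : M}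
    (ha : 0 ≤ a) : ∃ Λ : M →ₚ[ℂ] ℂ, Λ 1 = 1 ∧ Λ a = ‖a‖ := by
  have hne : ‖(1 : M) + a‖ ≠ 0 := by rw [CStarAlgebra.norm_one_add_of_nonneg ha]; positivity
  obtain ⟨Λ, hΛ, hΛa⟩ := exists_dual_vector ℂ _ hne
  have h1 : ‖Λ 1‖ ≤ 1 := by simpa [hΛ] using Λ.le_opNorm 1
  have h2 : ‖Λ a‖ ≤ ‖a‖ := by simpa [hΛ] using Λ.le_opNorm a
  have hre : (Λ 1).re + (Λ a).re = 1 + ‖a‖ := by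
    simpa [CStarAlgebra.norm_one_add_of_nonneg ha] using congrArg Complex.re hΛa
  have hΛ1 : Λ 1 = 1 := by
    exact_mod_cast Complex.eq_of_norm_le_re h1 (by linarith [(Λ a).re_le_norm])
  have hΛa' : Λ a = ‖a‖ := Complex.eq_of_norm_le_re h2 (by linarith [(Λ 1).re_le_norm])
  exact ⟨.mk₀ Λ.toLinearMap fun b hb ↦ StrongDual.apply_nonneg_of_nonneg hΛ.le hΛ1 hb,
    hΛ1, hΛa'⟩

end States

section lp

variable {X : Type*}

open scoped Classical in
@[simp] lemma linfDelta_apply (x z : X) :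
    (linfDelta x : X → ℂ) z = if z = x then 1 else 0 := rfl

@[simp] lemma inclCLinf_apply [TopologicalSpace X] [CompactSpace X] (f : C(X, ℂ)) (z : X) :
    (inclCLinf f : X → ℂ) z = f z := rfl

lemma isStarProjection_linfDelta (x : X) : IsStarProjection (linfDelta x) where
  isIdempotentElem := by
    ext z
    rw [lp.infty_coeFn_mul]
    by_cases hz : z = x <;> simp [hz]
  isSelfAdjoint := by
    ext z
    rw [lp.coeFn_star]
    by_cases hz : z = x <;> simp [hz]

lemma linfDelta_mul_mul_linfDelta (g : lp (fun _ : X => ℂ) ∞) (x : X) :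
    linfDelta x * g * linfDelta x = g x • linfDelta x := by
  ext z
  rw [lp.infty_coeFn_mul, lp.infty_coeFn_mul, lp.coeFn_smul]
  by_cases hz : z = x <;> simp [hz]

lemma lp.exists_eq_star_mul_self_of_nonneg {ι : Type*} (h : lp (fun _ : ι => ℂ) ∞)
    (hh : ∀ i, 0 ≤ h i) : ∃ r : lp (fun _ : ι => ℂ) ∞, h = star r * r := by
  refine ⟨⟨fun i => (Real.sqrt (h i).re : ℂ), memℓp_infty ⟨Real.sqrt ‖h‖, ?_⟩⟩, ?_⟩
  · rintro _ ⟨i, rfl⟩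
    simp only [Complex.norm_real, Real.norm_eq_abs, abs_of_nonneg (Real.sqrt_nonneg _)]
    exact Real.sqrt_le_sqrt
      ((Complex.re_le_norm _).trans (lp.norm_apply_le_norm ENNReal.top_ne_zero h i))
  · ext i
    rw [lp.infty_coeFn_mul, lp.coeFn_star]
    simp only [Pi.mul_apply, Pi.star_apply, Complex.star_def, Complex.conj_ofReal]
    rw [← Complex.ofReal_mul, Real.mul_self_sqrt (Complex.nonneg_iff.1 (hh i)).1]
    exact Complex.eq_re_of_ofReal_le (hh i)

end lp

lemma map_linfDelta_le_map_inclCLinf {X M : Type*} [TopologicalSpace X] [CompactSpace X]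
    [Ring M] [PartialOrder M] [StarRing M] [StarOrderedRing M] [Algebra ℂ M]
    (φC : lp (fun _ : X => ℂ) ∞ →⋆ₐ[ℂ] M) {f : C(X, ℂ)}
    {x : X} (hfx : f x = 1) (hf : ∀ z, 0 ≤ f z) : φC (linfDelta x) ≤ φC (inclCLinf f) := by
  obtain ⟨r, hr⟩ := lp.exists_eq_star_mul_self_of_nonneg (inclCLinf f - linfDelta x) fun z ↦ by
    by_cases hz : z = x <;> simp [hz, hfx, hf]
  rw [← sub_add_cancel (inclCLinf f) (linfDelta x), hr, map_add, map_mul, map_star]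
  exact le_add_of_nonneg_left (star_mul_self_nonneg _)

lemma exists_continuous_apply_eq_one_integral_lt {X : Type*} [TopologicalSpace X] [NormalSpace X]
    [T1Space X] [MeasurableSpace X] [OpensMeasurableSpace X] (μ : Measure X) [μ.OuterRegular]
    [NullSingletonClass μ] (x : X) {ε : ℝ} (hε : 0 < ε) :
    ∃ f : C(X, ℝ), f x = 1 ∧ (∀ z, 0 ≤ f z) ∧ ∫ z, f z ∂μ < ε := by
  obtain ⟨U, hxU, hU, hμU⟩ := Set.exists_isOpen_lt_of_lt (μ := μ) {x} (ENNReal.ofReal ε)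
    (by rw [measure_singleton x]; exact ENNReal.ofReal_pos.2 hε)
  obtain ⟨f, hfU, hfx, hf01⟩ := exists_continuous_zero_one_of_isClosed hU.isClosed_compl
    isClosed_singleton (Set.disjoint_compl_left_iff_subset.2 hxU)
  have hf_le : ∀ z, f z ≤ U.indicator 1 z := by
    intro z
    by_cases hz : z ∈ U
    · simpa [hz] using (hf01 z).2
    · simp [hz, hfU hz]
  refine ⟨f, hfx rfl, fun z ↦ (hf01 z).1, ?_⟩
  calc ∫ z, f z ∂μ ≤ ∫ z, U.indicator 1 z ∂μ :=
        integral_mono_of_nonneg (.of_forall fun z ↦ (hf01 z).1)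
          ((integrable_indicator_iff hU.measurableSet).2 (integrableOn_const hμU.ne_top))
          (.of_forall hf_le)
    _ = μ.real U := integral_indicator_one hU.measurableSet
    _ < ε := ENNReal.toReal_lt_of_lt_ofReal hμU

section Compression

variable {A M X Y : Type*} [CStarAlgebra A] [CStarAlgebra M] [PartialOrder M] [StarOrderedRing M]
  [TopologicalSpace X] [CompactSpace X] [T2Space X] [MeasurableSpace X] [BorelSpace X]
  [TopologicalSpace Y] [CompactSpace Y] [T2Space Y]
  {ιC : C(X, ℂ) →⋆ₐ[ℂ] A} {ιD : C(Y, ℂ) →⋆ₐ[ℂ] A}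

lemma RelativelyDiffuse.exists_measure_of_compression (hdiff : RelativelyDiffuse ιC ιD)
    (φ : A →⋆ₐ[ℂ] M) (φD : lp (fun _ : Y => ℂ) ∞ →⋆ₐ[ℂ] M)
    (hφD : ∀ f : C(Y, ℂ), φD (inclCLinf f) = φ (ιD f)) (Λ : M →ₚ[ℂ] ℂ) {y : Y}
    (hΛ : Λ (φD (linfDelta y)) ≠ 0) :
    ∃ μ : Measure X, μ.Regular ∧ IsProbabilityMeasure μ ∧ NullSingletonClass μ ∧ ∀ f : C(X, ℂ),
      Λ (φD (linfDelta y) * φ (ιC f) * φD (linfDelta y)) =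
        Λ (φD (linfDelta y)) * ∫ x, f x ∂μ := by
  set q := φD (linfDelta y)
  have hq : IsStarProjection q := (isStarProjection_linfDelta y).map φD
  let T : A →ₗ[ℂ] ℂ := (Λ q)⁻¹ • (Λ.toLinearMap ∘ₗ LinearMap.mulLeft ℂ q ∘ₗ
    LinearMap.mulRight ℂ q ∘ₗ φ.toLinearMap)
  have hT (z : A) : T z = (Λ q)⁻¹ * Λ (q * φ z * q) := by
    simp [T, mul_assoc]
  have hTD (g : C(Y, ℂ)) : T (ιD g) = g y := by
    rw [hT, ← hφD, ← map_mul, ← map_mul, linfDelta_mul_mul_linfDelta, map_smul, map_smul,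
      smul_eq_mul, mul_comm, mul_inv_cancel_right₀ hΛ]
    rfl
  have hT1 : T 1 = 1 := by
    rw [hT, map_one, mul_one, hq.isIdempotentElem.eq, inv_mul_cancel₀ hΛ]
  have hTpos (z : A) : 0 ≤ T (star z * z) := by
    have hcomp : q * φ (star z * z) * q = star (φ z * q) * (φ z * q) := by
      simp only [map_mul, map_star, star_mul, hq.isSelfAdjoint.star_eq, mul_assoc]
    rw [hT, hcomp]
    exact mul_nonneg (inv_nonneg_of_nonneg (Λ.map_nonneg hq.nonneg))
      (Λ.map_nonneg (star_mul_self_nonneg _))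
  obtain ⟨μ, hreg, hprob, hatoms, hμ⟩ := hdiff T hT1 hTpos (fun g h ↦ by simp only [hTD]; rfl)
  refine ⟨μ, hreg, hprob, hatoms, fun f ↦ ?_⟩
  rw [← hμ, hT, mul_inv_cancel_left₀ hΛ]

lemma RelativelyDiffuse.apply_compression_eq_zero (hdiff : RelativelyDiffuse ιC ιD)
    (φ : A →⋆ₐ[ℂ] M) (φC : lp (fun _ : X => ℂ) ∞ →⋆ₐ[ℂ] M) (φD : lp (fun _ : Y => ℂ) ∞ →⋆ₐ[ℂ] M)
    (hφC : ∀ f : C(X, ℂ), φC (inclCLinf f) = φ (ιC f))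
    (hφD : ∀ f : C(Y, ℂ), φD (inclCLinf f) = φ (ιD f)) (Λ : M →ₚ[ℂ] ℂ) (x : X) (y : Y) :
    Λ (φD (linfDelta y) * φC (linfDelta x) * φD (linfDelta y)) = 0 := by
  set p := φC (linfDelta x)
  set q := φD (linfDelta y)
  have hp : IsStarProjection p := (isStarProjection_linfDelta x).map φC
  have hq : IsStarProjection q := (isStarProjection_linfDelta y).map φD
  have h0 : 0 ≤ Λ (q * p * q) := Λ.map_nonneg (hq.isSelfAdjoint.conjugate_nonneg hp.nonneg)
  have hle : Λ (q * p * q) ≤ Λ q := OrderHomClass.mono Λ <| by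
    simpa [hq.isIdempotentElem.eq] using hq.isSelfAdjoint.conjugate_le_conjugate hp.le_one
  rcases eq_or_ne (Λ q) 0 with hΛq | hΛq
  · exact le_antisymm (hΛq ▸ hle) h0
  obtain ⟨μ, hreg, -, hatoms, hμ⟩ := hdiff.exists_measure_of_compression φ φD hφD Λ hΛq
  refine norm_le_zero_iff.1 (le_of_forall_pos_le_add fun ε hε ↦ ?_)
  obtain ⟨f, hfx, hf0, hfμ⟩ :=
    exists_continuous_apply_eq_one_integral_lt μ x (div_pos hε (norm_pos_iff.2 hΛq))
  set fc : C(X, ℂ) := ⟨fun z ↦ (f z : ℂ), by fun_prop⟩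
  have hpf : p ≤ φ (ιC fc) :=
    hφC fc ▸ map_linfDelta_le_map_inclCLinf φC (by simp [fc, hfx]) (by simp [fc, hf0])
  have hle' := OrderHomClass.mono Λ (hq.isSelfAdjoint.conjugate_le_conjugate hpf)
  have hfc : ∫ z, fc z ∂μ = ↑(∫ z, f z ∂μ) := integral_ofReal
  rw [hμ, hfc] at hle'
  have hf_int : 0 ≤ ∫ z, f z ∂μ := integral_nonneg hf0
  calc ‖Λ (q * p * q)‖ ≤ ‖Λ q‖ * ∫ z, f z ∂μ := by
        simpa [abs_of_nonneg hf_int] using CStarAlgebra.norm_le_norm_of_nonneg_of_le h0 hle'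
    _ ≤ 0 + ε := by
        rw [zero_add, ← le_div_iff₀' (norm_pos_iff.2 hΛq)]; exact hfμ.le

end Compression

/-- **Theorem (orthogonality of discretizing projections).**
If `C(X)` and `C(Y)` sit relatively diffusely in a unital C*-algebra `A`, and the
`*`-homomorphism `φ : A → M` restricts on these subalgebras to `*`-homomorphisms
`φ_C : ℓ∞(X) → M` and `φ_D : ℓ∞(Y) → M`, then `φ_C(δ_x) · φ_D(δ_y) = 0` for all
`x ∈ X`, `y ∈ Y`. -/
theorem stmt0 {A M : Type*} [CStarAlgebra A] [CStarAlgebra M]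
    {X Y : Type*} [TopologicalSpace X] [CompactSpace X] [T2Space X]
    [MeasurableSpace X] [BorelSpace X]
    [TopologicalSpace Y] [CompactSpace Y] [T2Space Y]
    (ιC : C(X, ℂ) →⋆ₐ[ℂ] A) (ιD : C(Y, ℂ) →⋆ₐ[ℂ] A)
    (hdiff : RelativelyDiffuse ιC ιD)
    (φ : A →⋆ₐ[ℂ] M)
    (φC : lp (fun _ : X => ℂ) ∞ →⋆ₐ[ℂ] M) (φD : lp (fun _ : Y => ℂ) ∞ →⋆ₐ[ℂ] M)
    (hφC : ∀ f : C(X, ℂ), φC (inclCLinf f) = φ (ιC f))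
    (hφD : ∀ f : C(Y, ℂ), φD (inclCLinf f) = φ (ιD f))
    (x : X) (y : Y) :
    φC (linfDelta x) * φD (linfDelta y) = 0 := by
  let _ := CStarAlgebra.spectralOrder M
  let _ := CStarAlgebra.spectralOrderedRing M
  set p := φC (linfDelta x)
  set q := φD (linfDelta y)
  have hp : IsStarProjection p := (isStarProjection_linfDelta x).map φC
  have hq : IsStarProjection q := (isStarProjection_linfDelta y).map φD
  have hpq : star (p * q) * (p * q) = q * p * q := by
    rw [star_mul, hp.isSelfAdjoint.star_eq, hq.isSelfAdjoint.star_eq, mul_assoc, ← mul_assoc p,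
      hp.isIdempotentElem.eq, ← mul_assoc]
  rw [← CStarRing.star_mul_self_eq_zero_iff, hpq]
  by_contra hpq0
  have : Nontrivial M := ⟨⟨_, 0, hpq0⟩⟩
  obtain ⟨Λ, -, hΛ⟩ :=
    exists_positiveLinearMap_apply_eq_norm (hq.isSelfAdjoint.conjugate_nonneg hp.nonneg)
  rw [hdiff.apply_compression_eq_zero φ φC φD hφC hφD Λ x y, eq_comm, Complex.ofReal_eq_zero,
    norm_eq_zero] at hΛ
  exact hpq0 hΛ
end

section
/- Let X be a set and let φ : (X → ℂ) → ℂ be a unital ℂ-algebra homomorphism on the algebra of all complex-valued functions on X (pointwise operations) that is continuous with respect to the product topology (topology of pointwise convergence) on X → ℂ. Then there exists a unique x ∈ X such that φ(f) = f(x) for every f : X → ℂ. -/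
/-- **Theorem (continuous characters of `ℂ^X` are point evaluations).**
Every unital `ℂ`-algebra homomorphism `φ : ℂ^X → ℂ` that is continuous for the product
topology (pointwise convergence) on `X → ℂ` is evaluation at a unique point of `X`. -/
theorem stmt6 {X : Type*} (φ : (X → ℂ) →ₐ[ℂ] ℂ) (hφ : Continuous φ) :
    ∃! x : X, ∀ f : X → ℂ, φ f = f x := by
  classical
  -- continuity at 0 gives a finite set I and open sets u
  have hopen : IsOpen (φ ⁻¹' Metric.ball 0 1) := hφ.isOpen_preimage _ Metric.isOpen_ball
  have h0 : (0 : X → ℂ) ∈ φ ⁻¹' Metric.ball 0 1 := by simp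
  obtain ⟨I, u, hu, hsub⟩ := (isOpen_pi_iff.mp hopen) 0 h0
  -- key: functions vanishing on I are killed by φ
  have key : ∀ f : X → ℂ, (∀ x ∈ I, f x = 0) → φ f = 0 := by
    intro f hf
    by_contra h
    have hc : ∀ c : ℂ, c • f ∈ (↑I : Set X).pi u := by
      intro c x hx
      have : (c • f) x = 0 := by simp [hf x hx]
      rw [this]
      exact (hu x hx).2
    have hb : ∀ c : ℂ, ‖c‖ * ‖φ f‖ < 1 := by
      intro c
      have := hsub (hc c)
      simpa [map_smul, norm_smul] using this
    have := hb ((2 / ‖φ f‖ : ℝ) : ℂ)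
    have hn : (0:ℝ) < ‖φ f‖ := norm_pos_iff.mpr h
    rw [Complex.norm_real, Real.norm_eq_abs, abs_of_pos (by positivity), div_mul_cancel₀ _ hn.ne'] at this
    linarith
  -- existence
  have hex : ∃ x : X, ∀ f : X → ℂ, φ f = f x := by
    by_cases hx : ∃ x ∈ I, ∀ f : X → ℂ, f x = 0 → φ f = 0
    · obtain ⟨x, _, hx⟩ := hx
      refine ⟨x, fun f => ?_⟩
      have h1 : φ (f - f x • 1) = 0 := by
        apply hx
        simp
      have := map_sub φ f (f x • 1)
      rw [h1] at this
      have h2 : φ (f x • (1 : X → ℂ)) = f x := by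
        rw [map_smul, map_one, smul_eq_mul, mul_one]
      linear_combination h2 - this
    · push_neg at hx
      choose g hg0 hgφ using hx
      exfalso
      set G : X → ℂ := ∏ x ∈ I.attach, (φ (g x x.2))⁻¹ • g x x.2 with hG
      have hvanish : ∀ y ∈ I, G y = 0 := by
        intro y hy
        rw [hG]
        rw [Finset.prod_apply]
        apply Finset.prod_eq_zero (Finset.mem_attach _ ⟨y, hy⟩)
        simp [hg0 y hy]
      have h1 : φ G = 0 := key G hvanish
      have h2 : φ G = 1 := by
        rw [hG, map_prod]
        apply Finset.prod_eq_one
        intro x _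
        rw [map_smul, smul_eq_mul, inv_mul_cancel₀ (hgφ x x.2)]
      rw [h1] at h2
      exact zero_ne_one h2
  -- uniqueness
  obtain ⟨x, hx⟩ := hex
  refine ⟨x, hx, fun y hy => ?_⟩
  have h1 := hx (fun z => if z = y then 1 else 0)
  have h2 := hy (fun z => if z = y then 1 else 0)
  rw [h2] at h1
  by_contra hne
  rw [if_pos rfl, if_neg (fun h => hne h.symm)] at h1
  exact one_ne_zero h1
end

section
/- Let H be a complex Hilbert space and let S be a set of pairwise commuting self-adjoint bounded operators on H, each of which is of the form λ·1 + k for some λ ∈ ℂ and some compact operator k on H. Then H admits a Hilbert (orthonormal) basis consisting of simultaneous eigenvectors: there is an orthonormal basis (e_b) of H such that for every basis vector e_b and every T ∈ S there exists a scalar μ ∈ ℂ with T e_b = μ · e_b. -/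
/-!
By Zorn's lemma, a maximal orthonormal family of joint eigenvectors is a Hilbert basis as soon
as every nonzero closed `S`-invariant subspace `M` contains a joint eigenvector; the orthogonal
complement of the span of such a family is invariant because `S` is self-adjoint.

If every member of `S` is scalar on `M` there is nothing to do. Otherwise pick `T₀ = c • 1 + k`
in `S` that is not scalar on `M`. In infinite dimension `c` lies in the spectrum of `T₀`, since an
invertible compact operator forces finite dimension; hence `c` is real and `k` is a compact
self-adjoint operator which is nonzero on `M`. Its restriction to `M` then has an eigenvalue
`μ ≠ 0`, and `M ⊓ eigenspace k μ` is a nonzero finite-dimensional `S`-invariant subspace (in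
finite dimension take `M` itself). There the commuting family `S` has a common eigenvector.
-/

open Module End Submodule

theorem Module.End.exists_common_eigenvector_mem_of_finiteDimensional {K V : Type*} [Field K]
    [IsAlgClosed K] [AddCommGroup V] [Module K V] {S : Set (End K V)}
    (hS : ∀ f ∈ S, ∀ g ∈ S, Commute f g)
    {W : Submodule K V} [FiniteDimensional K W] (hW : W ≠ ⊥)
    (hSW : ∀ f ∈ S, W ∈ f.invtSubmodule) :
    ∃ v ∈ W, v ≠ 0 ∧ ∀ f ∈ S, ∃ μ : K, f v = μ • v := by
  induction hn : finrank K W using Nat.strong_induction_on generalizing W with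
  | _ n ih =>
  by_cases hscalar : ∀ f ∈ S, ∃ μ : K, ∀ x ∈ W, f x = μ • x
  · obtain ⟨v, hvW, hv0⟩ := W.exists_mem_ne_zero_of_ne_bot hW
    exact ⟨v, hvW, hv0, fun f hf => (hscalar f hf).imp fun μ h => h v hvW⟩
  push Not at hscalar
  obtain ⟨f, hf, hfW⟩ := hscalar
  have : Nontrivial W := Submodule.nontrivial_iff_ne_bot.2 hW
  obtain ⟨μ, hμ⟩ := exists_eigenvalue (f.restrict (hSW f hf))
  obtain ⟨⟨u, huW⟩, hu⟩ := hμ.exists_hasEigenvector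
  have huμ : u ∈ eigenspace f μ := mem_eigenspace_iff.2 congr($(hu.apply_eq_smul).1)
  have hW'W : W ⊓ eigenspace f μ < W := by
    refine inf_le_left.lt_of_ne fun h => ?_
    obtain ⟨x, hxW, hx⟩ := hfW μ
    exact hx (mem_eigenspace_iff.1 (h.ge hxW).2)
  have hW'0 : W ⊓ eigenspace f μ ≠ ⊥ := by
    refine (Submodule.ne_bot_iff _).2 ⟨u, ⟨huW, huμ⟩, fun h => hu.2 ?_⟩
    simp [h]
  have hSW' : ∀ g ∈ S, W ⊓ eigenspace f μ ∈ g.invtSubmodule := fun g hg =>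
    invtSubmodule.inf_mem (hSW g hg) (mapsTo_genEigenspace_of_comm (hS f hf g hg) μ 1)
  obtain ⟨v, hv, hv0, hvS⟩ :=
    ih _ (hn ▸ Submodule.finrank_lt_finrank_of_lt hW'W) hW'0 hSW' rfl
  exact ⟨v, hv.1, hv0, hvS⟩

theorem FiniteDimensional.of_isUnit_of_isCompactOperator {𝕜 E : Type*}
    [NontriviallyNormedField 𝕜] [CompleteSpace 𝕜] [NormedAddCommGroup E] [NormedSpace 𝕜 E]
    {T : E →L[𝕜] E} (hT : IsUnit T) (hTc : IsCompactOperator T) : FiniteDimensional 𝕜 E := by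
  obtain ⟨u, rfl⟩ := hT
  have := hTc.clm_comp (↑u⁻¹ : E →L[𝕜] E)
  rw [← ContinuousLinearMap.coe_comp, ← ContinuousLinearMap.mul_def, Units.inv_mul] at this
  exact .of_isCompactOperator_id this

theorem mem_spectrum_of_isCompactOperator_sub_smul_one {𝕜 E : Type*}
    [NontriviallyNormedField 𝕜] [CompleteSpace 𝕜] [NormedAddCommGroup E] [NormedSpace 𝕜 E]
    (hE : ¬FiniteDimensional 𝕜 E) {T : E →L[𝕜] E} {c : 𝕜}
    (hTc : IsCompactOperator (T - c • (1 : E →L[𝕜] E))) : c ∈ spectrum 𝕜 T := by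
  rw [spectrum.mem_iff, ← IsUnit.neg_iff, neg_sub, Algebra.algebraMap_eq_smul_one]
  exact fun h => hE (.of_isUnit_of_isCompactOperator h hTc)

theorem IsCompactOperator.exists_eigenvector_mem_of_isSelfAdjoint {𝕜 E : Type*} [RCLike 𝕜]
    [NormedAddCommGroup E] [InnerProductSpace 𝕜 E] [CompleteSpace E]
    {A : E →L[𝕜] E} (hA : IsCompactOperator A) (hA' : IsSelfAdjoint A)
    {M : Submodule 𝕜 E} (hM : IsClosed (M : Set E)) (hAM : M ∈ invtSubmodule (A : E →ₗ[𝕜] E))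
    (hAM0 : ∃ x ∈ M, A x ≠ 0) : ∃ μ : 𝕜, μ ≠ 0 ∧ ∃ v ∈ M, v ≠ 0 ∧ A v = μ • v := by
  have : CompleteSpace M := hM.completeSpace_coe
  set B := A.restrict hAM
  have hBc : IsCompactOperator B := hA.restrict' (f := (A : E →ₗ[𝕜] E)) hAM
  have hBs : (B : M →ₗ[𝕜] M).IsSymmetric := hA'.isSymmetric.restrict_invariant hAM
  have hB0 : B ≠ 0 := by
    obtain ⟨x, hxM, hx⟩ := hAM0
    exact fun h => hx congr(($h ⟨x, hxM⟩).1)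
  rw [ne_eq, ← ContinuousLinearMap.eq_zero_of_forall_hasEigenvalue_eq_zero hBc hBs] at hB0
  push Not at hB0
  obtain ⟨μ, hμ, hμ0⟩ := hB0
  obtain ⟨⟨v, hvM⟩, hv⟩ := hμ.exists_hasEigenvector
  refine ⟨μ, hμ0, v, hvM, fun h => hv.2 (by simp [h]), ?_⟩
  exact congr($(hv.apply_eq_smul).1)

theorem Orthonormal.insert_of_mem_orthogonal {𝕜 E : Type*} [RCLike 𝕜] [NormedAddCommGroup E]
    [InnerProductSpace 𝕜 E] {s : Set E} (hs : Orthonormal 𝕜 ((↑) : s → E)) {v : E}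
    (hv : ‖v‖ = 1) (hvs : v ∈ (span 𝕜 s)ᗮ) : Orthonormal 𝕜 ((↑) : ↥(insert v s) → E) := by
  classical
  rw [orthonormal_subtype_iff_ite] at hs ⊢
  have hsv : ∀ u ∈ s, inner 𝕜 u v = 0 := fun u hu => hvs u (subset_span hu)
  rintro a (rfl | ha) b (rfl | hb)
  · simp [hv]
  · split_ifs with h
    · subst h; simp [hv]
    · rw [inner_eq_zero_symm]; exact hsv b hb
  · split_ifs with h
    · subst h; simp [hv]
    · exact hsv a ha
  · exact hs a ha b hb

theorem Module.End.span_mem_invtSubmodule_of_forall_eq_smul {R M : Type*} [CommSemiring R]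
    [AddCommMonoid M] [Module R M] {f : End R M} {s : Set M}
    (hs : ∀ v ∈ s, ∃ μ : R, f v = μ • v) : span R s ∈ f.invtSubmodule := by
  rw [mem_invtSubmodule, span_le]
  intro v hv
  obtain ⟨μ, hμ⟩ := hs v hv
  simp [hμ, smul_mem _ _ (subset_span hv)]

theorem exists_hilbertBasis_subset {𝕜 E : Type*} [RCLike 𝕜] [NormedAddCommGroup E]
    [InnerProductSpace 𝕜 E] [CompleteSpace E] {G : Set E}
    (hG : ∀ s ⊆ G, (span 𝕜 s)ᗮ ≠ ⊥ → ∃ v ∈ G, ‖v‖ = 1 ∧ v ∈ (span 𝕜 s)ᗮ) :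
    ∃ (w : Set E) (b : HilbertBasis w 𝕜 E), ⇑b = ((↑) : w → E) ∧ w ⊆ G := by
  obtain ⟨w, hw⟩ := zorn_subset {s | s ⊆ G ∧ Orthonormal 𝕜 ((↑) : s → E)} fun c hc hch =>
    ⟨⋃₀ c, ⟨Set.sUnion_subset fun s hs => (hc hs).1,
      orthonormal_sUnion_of_directed hch.directedOn fun s hs => (hc hs).2⟩,
      fun _ => Set.subset_sUnion_of_mem⟩
  obtain ⟨hwG, hwo⟩ := hw.prop
  have hw0 : (span 𝕜 w)ᗮ = ⊥ := by
    by_contra h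
    obtain ⟨v, hvG, hv1, hvw⟩ := hG w hwG h
    have hv : v ∈ w := hw.2 ⟨Set.insert_subset hvG hwG, hwo.insert_of_mem_orthogonal hv1 hvw⟩
      (Set.subset_insert v w) (Set.mem_insert v w)
    have : v = 0 := inner_self_eq_zero.1 (hvw v (subset_span hv))
    simp [this] at hv1
  exact ⟨w, .mkOfOrthogonalEqBot hwo (by rwa [Subtype.range_coe]),
    HilbertBasis.coe_mkOfOrthogonalEqBot _ _, hwG⟩

section

variable {E : Type*} [NormedAddCommGroup E] [InnerProductSpace ℂ E] [CompleteSpace E]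

theorem IsSelfAdjoint.sub_smul_one_of_not_finiteDimensional {T : E →L[ℂ] E}
    (hT : IsSelfAdjoint T) (hE : ¬FiniteDimensional ℂ E) {c : ℂ}
    (hTc : IsCompactOperator (T - c • (1 : E →L[ℂ] E))) :
    IsSelfAdjoint (T - c • (1 : E →L[ℂ] E)) := by
  have hc : c = c.re :=
    hT.mem_spectrum_eq_re (mem_spectrum_of_isCompactOperator_sub_smul_one hE hTc)
  have hc1 : IsSelfAdjoint ((c.re : ℂ) • (1 : E →L[ℂ] E)) :=
    .smul (Complex.conj_ofReal _) (.one _)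
  rw [hc]
  exact hT.sub hc1

theorem exists_common_eigenvector_mem_of_isCompactOperator_sub_smul_one {S : Set (E →L[ℂ] E)}
    (hcomm : ∀ T₁ ∈ S, ∀ T₂ ∈ S, T₁ * T₂ = T₂ * T₁) (hsa : ∀ T ∈ S, IsSelfAdjoint T)
    (hform : ∀ T ∈ S, ∃ c : ℂ, IsCompactOperator (T - c • (1 : E →L[ℂ] E)))
    {M : Submodule ℂ E} (hM : IsClosed (M : Set E)) (hM0 : M ≠ ⊥)
    (hMS : ∀ T ∈ S, M ∈ invtSubmodule (T : E →ₗ[ℂ] E)) :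
    ∃ v ∈ M, v ≠ 0 ∧ ∀ T ∈ S, ∃ μ : ℂ, T v = μ • v := by
  by_cases hscalar : ∀ T ∈ S, ∃ μ : ℂ, ∀ x ∈ M, T x = μ • x
  · obtain ⟨v, hvM, hv0⟩ := M.exists_mem_ne_zero_of_ne_bot hM0
    exact ⟨v, hvM, hv0, fun T hT => (hscalar T hT).imp fun μ h => h v hvM⟩
  push Not at hscalar
  obtain ⟨T₀, hT₀, hT₀M⟩ := hscalar
  have hcomm' : ∀ T₁ ∈ S, ∀ T₂ ∈ S, Commute (T₁ : E →ₗ[ℂ] E) T₂ := fun T₁ h₁ T₂ h₂ =>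
    (show Commute T₁ T₂ from hcomm T₁ h₁ T₂ h₂).map ContinuousLinearMap.toLinearMapRingHom
  suffices ∃ W ≤ M, FiniteDimensional ℂ W ∧ W ≠ ⊥ ∧
      ∀ T ∈ S, W ∈ invtSubmodule (T : E →ₗ[ℂ] E) by
    obtain ⟨W, hWM, hW, hW0, hWS⟩ := this
    obtain ⟨v, hv, hv0, hvS⟩ := exists_common_eigenvector_mem_of_finiteDimensional
      (S := ContinuousLinearMap.toLinearMap '' S) (by simpa using hcomm') hW0 (by simpa using hWS)
    exact ⟨v, hWM hv, hv0, fun T hT => hvS _ ⟨T, hT, rfl⟩⟩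
  by_cases hE : FiniteDimensional ℂ E
  · exact ⟨M, le_rfl, inferInstance, hM0, hMS⟩
  obtain ⟨c, hc⟩ := hform T₀ hT₀
  set A := T₀ - c • (1 : E →L[ℂ] E)
  have hAM : M ∈ invtSubmodule (A : E →ₗ[ℂ] E) := fun x hx =>
    M.sub_mem (hMS T₀ hT₀ hx) (M.smul_mem c hx)
  have hAM0 : ∃ x ∈ M, A x ≠ 0 := (hT₀M c).imp fun x ⟨hxM, hx⟩ =>
    ⟨hxM, by simpa [A, sub_eq_zero] using hx⟩
  obtain ⟨μ, hμ0, v, hvM, hv0, hAv⟩ := hc.exists_eigenvector_mem_of_isSelfAdjoint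
    ((hsa T₀ hT₀).sub_smul_one_of_not_finiteDimensional hE hc) hM hAM hAM0
  have := ContinuousLinearMap.finite_dimensional_eigenspace hc μ hμ0
  refine ⟨M ⊓ eigenspace (A : End ℂ E) μ, inf_le_left, inferInstance, ?_, fun T hT => ?_⟩
  · exact (Submodule.ne_bot_iff _).2 ⟨v, ⟨hvM, mem_eigenspace_iff.2 hAv⟩, hv0⟩
  · refine invtSubmodule.inf_mem (hMS T hT) (mapsTo_genEigenspace_of_comm ?_ μ 1)
    exact (hcomm' T₀ hT₀ T hT).sub_left ((Commute.one_left _).smul_left c)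

end

/-- **Theorem (simultaneous diagonalization in `ℂ·1 + K(H)`).**
If `S` is a set of pairwise commuting self-adjoint bounded operators on a complex Hilbert
space `H`, each of the form `λ·1 + k` with `λ ∈ ℂ` and `k` a compact operator, then `H` has
a Hilbert (orthonormal) basis consisting of simultaneous eigenvectors of all members of
`S`. -/
theorem stmt11 {H : Type u} [NormedAddCommGroup H] [InnerProductSpace ℂ H] [CompleteSpace H]
    (S : Set (H →L[ℂ] H))
    (hcomm : ∀ T₁ ∈ S, ∀ T₂ ∈ S, T₁ * T₂ = T₂ * T₁)
    (hsa : ∀ T ∈ S, IsSelfAdjoint T)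
    (hform : ∀ T ∈ S, ∃ (lam : ℂ) (k : H →L[ℂ] H),
      IsCompactOperator k ∧ T = lam • (1 : H →L[ℂ] H) + k) :
    ∃ (ι : Type u) (b : HilbertBasis ι ℂ H),
      ∀ (i : ι), ∀ T ∈ S, ∃ mu : ℂ, T (b i) = mu • b i := by
  have hform' : ∀ T ∈ S, ∃ c : ℂ, IsCompactOperator (T - c • (1 : H →L[ℂ] H)) := by
    intro T hT
    obtain ⟨c, k, hk, rfl⟩ := hform T hT
    exact ⟨c, by simpa using hk⟩
  obtain ⟨w, b, hb, hwG⟩ := exists_hilbertBasis_subset (𝕜 := ℂ)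
    (G := {v | ∀ T ∈ S, ∃ μ : ℂ, T v = μ • v}) fun s hsG hs0 => by
      have hinv : ∀ T ∈ S, (span ℂ s)ᗮ ∈ invtSubmodule (T : H →ₗ[ℂ] H) := fun T hT =>
        (hsa T hT).isSymmetric.orthogonalComplement_mem_invtSubmodule
          (span_mem_invtSubmodule_of_forall_eq_smul fun v hv => hsG hv T hT)
      obtain ⟨v, hv, hv0, hvS⟩ := exists_common_eigenvector_mem_of_isCompactOperator_sub_smul_one
        hcomm hsa hform' (isClosed_orthogonal _) hs0 hinv
      refine ⟨(‖v‖⁻¹ : ℂ) • v, fun T hT => ?_, norm_smul_inv_norm hv0, smul_mem _ _ hv⟩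
      obtain ⟨μ, hμ⟩ := hvS T hT
      exact ⟨μ, by rw [map_smul, hμ, smul_comm]⟩
  exact ⟨w, b, fun i T hT => by rw [hb]; exact hwG i.2 T hT⟩
end
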